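/- arXiv:2605.04747 — 5 statements merged into one kernel-verified Lean document; each statement's English description precedes it below -/
import Mathlib

section
/- Let Δ : [L]×[L] → ℝ be symmetric with zero row sums, and define the CA score S_CA(a,b) = 1 if Δ(a,b) > 0 and 0 otherwise. Then for the truthful strategy f*(a) = a, the expected reward E(f*,f*) = ∑_{a,b} Δ(a,b)·S_CA(a,b) equals ∑_{(a,b): Δ(a,b)>0} Δ(a,b), and for any deterministic strategies f1, f2 : [L] → [L], E(f1,f2) = ∑_{a,b} Δ(a,b)·S_CA(f1(a),f2(b)) ≤ E(f*,f*). -/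
/-- Informed truthfulness of Correlated Agreement: with a symmetric
zero-row-sum delta matrix and score `S_CA(a,b) = 1{Δ(a,b) > 0}`, the
truthful strategy gets `∑_{Δ(a,b)>0} Δ(a,b)`, and no deterministic
strategy pair earns more. -/
theorem CA_informed_truthful {L : ℕ}
    (Δ : Fin L → Fin L → ℝ)
    (hsymm : ∀ a b, Δ a b = Δ b a)
    (hrow : ∀ a, ∑ b, Δ a b = 0)
    (SCA : Fin L → Fin L → ℝ)
    (hSCA : ∀ a b, SCA a b = if 0 < Δ a b then 1 else 0) :
    (∑ a, ∑ b, Δ a b * SCA a b = ∑ a, ∑ b, if 0 < Δ a b then Δ a b else 0) ∧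
    (∀ f1 f2 : Fin L → Fin L,
      ∑ a, ∑ b, Δ a b * SCA (f1 a) (f2 b)
        ≤ ∑ a, ∑ b, Δ a b * SCA a b) := by
  have key : ∀ a b, Δ a b * SCA a b = if 0 < Δ a b then Δ a b else 0 := by
    intro a b
    rw [hSCA]
    by_cases h : 0 < Δ a b <;> simp [h]
  constructor
  · exact Finset.sum_congr rfl fun a _ => Finset.sum_congr rfl fun b _ => key a b
  · intro f1 f2
    apply Finset.sum_le_sum
    intro a _
    apply Finset.sum_le_sum
    intro b _
    rw [key, hSCA]
    by_cases h : 0 < Δ (f1 a) (f2 b) <;> by_cases h2 : 0 < Δ a b <;>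
      simp [h, h2] <;> linarith
end

section
/- Let Δ : [L]×[L] → ℝ satisfy the categorical-world condition: Δ(a,a) > 0 for all a and Δ(a,b) < 0 for all a ≠ b. Under the KFCA score S(r1,r2) = 1{r1 = r2}, the expected reward E(f1,f2) = ∑_{a,b} Δ(a,b)·1{f1(a) = f2(b)} is maximized over all pairs of functions f1, f2 : [L] → [L] exactly when f1 = f2 = π for some bijection π : [L] → [L], and the maximum value is ∑_a Δ(a,a). -/
/-- KFCA strict truthfulness: under the categorical-world condition, the
agreement-score expected reward is maximized exactly by pairs of identical
bijections, with maximum value `∑_a Δ(a,a)`. -/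
theorem KFCA_max_iff_shared_bijection {L : ℕ}
    (Δ : Fin L → Fin L → ℝ)
    (hdiag : ∀ a, 0 < Δ a a)
    (hoff : ∀ a b, a ≠ b → Δ a b < 0) :
    (∀ f1 f2 : Fin L → Fin L,
      (∑ a, ∑ b, Δ a b * (if f1 a = f2 b then (1:ℝ) else 0)) ≤ ∑ a, Δ a a) ∧
    (∀ f1 f2 : Fin L → Fin L,
      (∑ a, ∑ b, Δ a b * (if f1 a = f2 b then (1:ℝ) else 0)) = ∑ a, Δ a a ↔
        ∃ π : Equiv.Perm (Fin L), f1 = ⇑π ∧ f2 = ⇑π) := by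
  have key : ∀ f1 f2 : Fin L → Fin L, ∀ a b : Fin L,
      Δ a b * (if f1 a = f2 b then (1:ℝ) else 0) ≤ (if a = b then Δ a a else 0) := by
    intro f1 f2 a b
    by_cases hab : a = b
    · subst hab
      by_cases h : f1 a = f2 a
      · simp [h]
      · simp [h]; exact (hdiag a).le
    · simp only [if_neg hab]
      by_cases h : f1 a = f2 b
      · simpa [h] using (hoff a b hab).le
      · simp [h]
  have hbound : ∀ f1 f2 : Fin L → Fin L,
      (∑ a, ∑ b, Δ a b * (if f1 a = f2 b then (1:ℝ) else 0)) ≤ ∑ a, Δ a a := by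
    intro f1 f2
    calc ∑ a, ∑ b, Δ a b * (if f1 a = f2 b then (1:ℝ) else 0)
        ≤ ∑ a : Fin L, ∑ b : Fin L, (if a = b then Δ a a else 0) := by
          refine Finset.sum_le_sum fun a _ => Finset.sum_le_sum fun b _ => key f1 f2 a b
      _ = ∑ a, Δ a a := by simp
  refine ⟨hbound, fun f1 f2 => ⟨fun heq => ?_, ?_⟩⟩
  · have h1 : ∑ p : Fin L × Fin L, Δ p.1 p.2 * (if f1 p.1 = f2 p.2 then (1:ℝ) else 0)
        = ∑ p : Fin L × Fin L, (if p.1 = p.2 then Δ p.1 p.1 else 0) := by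
      rw [Fintype.sum_prod_type, Fintype.sum_prod_type, heq]
      simp
    have h2 := (Finset.sum_eq_sum_iff_of_le (fun (p : Fin L × Fin L) _ => key f1 f2 p.1 p.2)).mp h1
    have heqd : ∀ a, f1 a = f2 a := by
      intro a
      by_contra h
      have := h2 (a, a) (Finset.mem_univ _)
      simp [h] at this
      exact absurd this.symm (hdiag a).ne'
    have hne : ∀ a b, a ≠ b → f1 a ≠ f2 b := by
      intro a b hab h
      have := h2 (a, b) (Finset.mem_univ _)
      simp [h, hab] at this
      exact absurd this (hoff a b hab).ne
    have hinj : Function.Injective f1 := by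
      intro a b h
      by_contra hab
      exact hne a b hab (h.trans (heqd b))
    have hbij : Function.Bijective f1 := Finite.injective_iff_bijective.mp hinj
    refine ⟨Equiv.ofBijective f1 hbij, rfl, ?_⟩
    funext a
    exact (heqd a).symm
  · rintro ⟨π, rfl, rfl⟩
    simp [Equiv.apply_eq_iff_eq, mul_ite, Finset.sum_ite_eq]
end

section
/- Let Δ : [L]×[L] → ℝ satisfy the categorical-world condition (Δ(a,a) > 0 for all a, Δ(a,b) < 0 for a ≠ b). Then for any deterministic strategies f1, f2 : [L] → [L] that are not both equal to a common bijection, the KFCA expected reward ∑_{a,b} Δ(a,b)·1{f1(a)=f2(b)} is strictly less than ∑_a Δ(a,a). -/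
/-- Strictness: any strategy pair that is not a shared bijection earns
strictly less than `∑_a Δ(a,a)` under KFCA, given the categorical-world
condition. -/
theorem KFCA_strict_lt_of_not_shared_bijection {L : ℕ}
    (Δ : Fin L → Fin L → ℝ)
    (hdiag : ∀ a, 0 < Δ a a)
    (hoff : ∀ a b, a ≠ b → Δ a b < 0) :
    ∀ f1 f2 : Fin L → Fin L,
      (¬ ∃ π : Equiv.Perm (Fin L), f1 = ⇑π ∧ f2 = ⇑π) →
      (∑ a, ∑ b, Δ a b * (if f1 a = f2 b then (1:ℝ) else 0)) < ∑ a, Δ a a := by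
  intro f1 f2 hne
  have key : ∀ a b, Δ a b * (if f1 a = f2 b then (1:ℝ) else 0) ≤
      (if b = a then Δ a a else 0) := by
    intro a b
    by_cases hba : b = a
    · subst hba
      rw [if_pos rfl]
      split
      · simp
      · simpa using (hdiag b).le
    · rw [if_neg hba]
      split
      · simpa using (hoff a b (fun h => hba h.symm)).le
      · simp
  have row_le : ∀ a, (∑ b, Δ a b * (if f1 a = f2 b then (1:ℝ) else 0)) ≤ Δ a a := by
    intro a
    calc (∑ b, Δ a b * (if f1 a = f2 b then (1:ℝ) else 0))
        ≤ ∑ b, (if b = a then Δ a a else 0) :=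
          Finset.sum_le_sum (fun b _ => key a b)
      _ = Δ a a := by simp
  have hwit : ∃ a, (∑ b, Δ a b * (if f1 a = f2 b then (1:ℝ) else 0)) < Δ a a := by
    by_cases hf : f1 = f2
    · subst hf
      have hninj : ¬ Function.Injective f1 := by
        intro hinj
        exact hne ⟨Equiv.ofBijective f1 ((Finite.injective_iff_bijective).mp hinj),
          rfl, rfl⟩
      obtain ⟨a, b, hab, hne'⟩ := Function.not_injective_iff.mp hninj
      refine ⟨a, ?_⟩
      have h : (∑ b', Δ a b' * (if f1 a = f1 b' then (1:ℝ) else 0)) <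
          ∑ b', (if b' = a then Δ a a else 0) :=
        Finset.sum_lt_sum (fun b' _ => key a b')
          ⟨b, Finset.mem_univ b, by
            rw [if_pos hab, if_neg (show ¬ b = a from fun h => hne' h.symm)]
            simpa using hoff a b hne'⟩
      simpa using h
    · obtain ⟨a, ha⟩ := Function.ne_iff.mp hf
      refine ⟨a, ?_⟩
      have h : (∑ b', Δ a b' * (if f1 a = f2 b' then (1:ℝ) else 0)) <
          ∑ b', (if b' = a then Δ a a else 0) :=
        Finset.sum_lt_sum (fun b' _ => key a b')
          ⟨a, Finset.mem_univ a, by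
            rw [if_neg ha, if_pos rfl]
            simpa using hdiag a⟩
      simpa using h
  obtain ⟨a, hstrict⟩ := hwit
  exact Finset.sum_lt_sum (fun a _ => row_le a) ⟨a, Finset.mem_univ a, hstrict⟩
end

section
/- Shirking covariance scaling: Suppose clients 1 and 2 exert effort independently with probabilities η1, η2 ∈ [0,1]; with effort client i's signal has distribution P_i(·|Y) given latent truth Y ~ π, without effort it is drawn from a fixed distribution Q_i independent of Y and of the other client. Assuming conditional independence of signals given (effort indicators, Y), the delta matrix satisfies Δ(a,b) = η1·η2·Cov_{Y~π}(P_1(a|Y), P_2(b|Y)). -/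
/-- Shirking covariance scaling: with independent effort probabilities
`η1, η2`, informative channels `P_i(·|y)`, and uninformative fallbacks
`Q_i`, the delta matrix satisfies
`Δ(a,b) = η1·η2·Cov_{Y∼π}(P1(a|Y), P2(b|Y))`. -/
theorem shirking_covariance_scaling {K L : ℕ}
    (π : Fin K → ℝ) (hπ0 : ∀ y, 0 ≤ π y) (hπ1 : ∑ y, π y = 1)
    (η1 η2 : ℝ) (hη1 : 0 ≤ η1 ∧ η1 ≤ 1) (hη2 : 0 ≤ η2 ∧ η2 ≤ 1)
    (P1 P2 : Fin L → Fin K → ℝ) (Q1 Q2 : Fin L → ℝ)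
    (m1 m2 : Fin L → Fin K → ℝ)
    (hm1 : ∀ a y, m1 a y = η1 * P1 a y + (1-η1) * Q1 a)
    (hm2 : ∀ b y, m2 b y = η2 * P2 b y + (1-η2) * Q2 b) :
    ∀ a b : Fin L,
      (∑ y, π y * (m1 a y * m2 b y))
        - (∑ y, π y * m1 a y) * (∑ y, π y * m2 b y)
      = η1 * η2 *
        ((∑ y, π y * (P1 a y * P2 b y))
          - (∑ y, π y * P1 a y) * (∑ y, π y * P2 b y)) := by
  intro a b
  set c1 := (1-η1) * Q1 a with hc1
  set c2 := (1-η2) * Q2 b with hc2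
  have e1 : ∑ y, π y * m1 a y = η1 * (∑ y, π y * P1 a y) + c1 := by
    calc ∑ y, π y * m1 a y = ∑ y, (η1 * (π y * P1 a y) + c1 * π y) := by
          apply Finset.sum_congr rfl; intro y _; rw [hm1]; ring
      _ = η1 * (∑ y, π y * P1 a y) + c1 * ∑ y, π y := by
          rw [Finset.sum_add_distrib, ← Finset.mul_sum, ← Finset.mul_sum]
      _ = _ := by rw [hπ1]; ring
  have e2 : ∑ y, π y * m2 b y = η2 * (∑ y, π y * P2 b y) + c2 := by
    calc ∑ y, π y * m2 b y = ∑ y, (η2 * (π y * P2 b y) + c2 * π y) := by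
          apply Finset.sum_congr rfl; intro y _; rw [hm2]; ring
      _ = η2 * (∑ y, π y * P2 b y) + c2 * ∑ y, π y := by
          rw [Finset.sum_add_distrib, ← Finset.mul_sum, ← Finset.mul_sum]
      _ = _ := by rw [hπ1]; ring
  have e3 : ∑ y, π y * (m1 a y * m2 b y)
      = η1 * η2 * (∑ y, π y * (P1 a y * P2 b y))
        + η1 * c2 * (∑ y, π y * P1 a y)
        + η2 * c1 * (∑ y, π y * P2 b y) + c1 * c2 := by
    calc ∑ y, π y * (m1 a y * m2 b y)
        = ∑ y, (η1 * η2 * (π y * (P1 a y * P2 b y))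
            + (η1 * c2 * (π y * P1 a y)
            + (η2 * c1 * (π y * P2 b y) + c1 * c2 * π y))) := by
          apply Finset.sum_congr rfl; intro y _; rw [hm1, hm2]; ring
      _ = η1 * η2 * (∑ y, π y * (P1 a y * P2 b y))
            + (η1 * c2 * (∑ y, π y * P1 a y)
            + (η2 * c1 * (∑ y, π y * P2 b y) + c1 * c2 * ∑ y, π y)) := by
          rw [Finset.sum_add_distrib, Finset.sum_add_distrib, Finset.sum_add_distrib,
            ← Finset.mul_sum, ← Finset.mul_sum, ← Finset.mul_sum, ← Finset.mul_sum]
      _ = _ := by rw [hπ1]; ring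
  rw [e1, e2, e3]; ring
end

section
/- The maximal KFCA reward is permutation-degenerate: under the categorical-world condition there are exactly L! maximizing strategy pairs (f1, f2), namely the pairs with f1 = f2 = π for bijections π : [L] → [L], all achieving the common value ∑_a Δ(a,a). -/
open Classical in
/-- Permutation degeneracy of the KFCA maximum: under the categorical-world
condition there are exactly `L!` maximizing strategy pairs, namely the
shared-bijection pairs `(π, π)`, all achieving the value `∑_a Δ(a,a)`. -/
theorem KFCA_maximizers_count {L : ℕ}
    (Δ : Fin L → Fin L → ℝ)
    (hdiag : ∀ a, 0 < Δ a a)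
    (hoff : ∀ a b, a ≠ b → Δ a b < 0) :
    (∀ f1 f2 : Fin L → Fin L,
      (∑ a, ∑ b, Δ a b * (if f1 a = f2 b then (1:ℝ) else 0)) ≤ ∑ a, Δ a a) ∧
    (∀ p : (Fin L → Fin L) × (Fin L → Fin L),
      (∑ a, ∑ b, Δ a b * (if p.1 a = p.2 b then (1:ℝ) else 0)) = ∑ a, Δ a a ↔
        ∃ π : Equiv.Perm (Fin L), p.1 = ⇑π ∧ p.2 = ⇑π) ∧
    (Finset.univ.filter
      (fun p : (Fin L → Fin L) × (Fin L → Fin L) =>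
        (∑ a, ∑ b, Δ a b * (if p.1 a = p.2 b then (1:ℝ) else 0))
          = ∑ a, Δ a a)).card = Nat.factorial L := by
  classical
  -- per-row nonpositivity of off-diagonal contributions
  have hterm_nonpos : ∀ (f1 f2 : Fin L → Fin L) (a : Fin L),
      ∀ b ∈ Finset.univ.erase a,
        Δ a b * (if f1 a = f2 b then (1:ℝ) else 0) ≤ 0 := by
    intro f1 f2 a b hb
    have hba : b ≠ a := (Finset.mem_erase.1 hb).1
    have : Δ a b < 0 := hoff a b (Ne.symm hba)
    split_ifs <;> nlinarith
  have hsplit : ∀ (f1 f2 : Fin L → Fin L) (a : Fin L),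
      (∑ b, Δ a b * (if f1 a = f2 b then (1:ℝ) else 0)) =
        (∑ b ∈ Finset.univ.erase a, Δ a b * (if f1 a = f2 b then (1:ℝ) else 0))
          + Δ a a * (if f1 a = f2 a then (1:ℝ) else 0) := by
    intro f1 f2 a
    rw [Finset.sum_erase_add _ _ (Finset.mem_univ a)]
  have hinner : ∀ (f1 f2 : Fin L → Fin L) (a : Fin L),
      (∑ b, Δ a b * (if f1 a = f2 b then (1:ℝ) else 0)) ≤ Δ a a := by
    intro f1 f2 a
    rw [hsplit f1 f2 a]
    have h1 : Δ a a * (if f1 a = f2 a then (1:ℝ) else 0) ≤ Δ a a := by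
      split_ifs <;> simp [le_of_lt (hdiag a)]
    have h2 : (∑ b ∈ Finset.univ.erase a,
        Δ a b * (if f1 a = f2 b then (1:ℝ) else 0)) ≤ 0 :=
      Finset.sum_nonpos (hterm_nonpos f1 f2 a)
    linarith
  have hbound : ∀ f1 f2 : Fin L → Fin L,
      (∑ a, ∑ b, Δ a b * (if f1 a = f2 b then (1:ℝ) else 0)) ≤ ∑ a, Δ a a :=
    fun f1 f2 => Finset.sum_le_sum (fun a _ => hinner f1 f2 a)
  -- equality characterization
  have hchar : ∀ p : (Fin L → Fin L) × (Fin L → Fin L),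
      (∑ a, ∑ b, Δ a b * (if p.1 a = p.2 b then (1:ℝ) else 0)) = ∑ a, Δ a a ↔
        ∃ π : Equiv.Perm (Fin L), p.1 = ⇑π ∧ p.2 = ⇑π := by
    intro ⟨f1, f2⟩
    constructor
    · intro heq
      have hrow : ∀ a : Fin L,
          (∑ b, Δ a b * (if f1 a = f2 b then (1:ℝ) else 0)) = Δ a a := by
        have := (Finset.sum_eq_sum_iff_of_le
          (fun a (_ : a ∈ Finset.univ) => hinner f1 f2 a)).1 heq
        exact fun a => this a (Finset.mem_univ a)
      have hdiag_eq : ∀ a, f1 a = f2 a := by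
        intro a
        have h := hrow a
        rw [hsplit f1 f2 a] at h
        have h2 : (∑ b ∈ Finset.univ.erase a,
            Δ a b * (if f1 a = f2 b then (1:ℝ) else 0)) ≤ 0 :=
          Finset.sum_nonpos (hterm_nonpos f1 f2 a)
        by_contra hne
        rw [if_neg hne] at h
        have := hdiag a
        nlinarith
      have hoff_ne : ∀ a b : Fin L, a ≠ b → f1 a ≠ f2 b := by
        intro a b hab
        have h := hrow a
        rw [hsplit f1 f2 a] at h
        rw [if_pos (hdiag_eq a)] at h
        have hzero : (∑ b ∈ Finset.univ.erase a,
            Δ a b * (if f1 a = f2 b then (1:ℝ) else 0)) = 0 := by linarith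
        have := (Finset.sum_eq_zero_iff_of_nonpos (hterm_nonpos f1 f2 a)).1 hzero
          b (Finset.mem_erase.2 ⟨Ne.symm hab, Finset.mem_univ b⟩)
        intro hcontra
        rw [if_pos hcontra] at this
        have hneg : Δ a b < 0 := hoff a b hab
        nlinarith
      have hinj : Function.Injective f2 := by
        intro a b hab
        by_contra hne
        exact hoff_ne a b hne ((hdiag_eq a).trans hab)
      have hbij : Function.Bijective f2 := (Finite.injective_iff_bijective).1 hinj
      refine ⟨Equiv.ofBijective f2 hbij, ?_, rfl⟩
      funext a
      simpa [Equiv.ofBijective] using hdiag_eq a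
    · rintro ⟨π, h1, h2⟩
      obtain rfl : f1 = ⇑π := h1
      obtain rfl : f2 = ⇑π := h2
      refine Finset.sum_congr rfl (fun a _ => ?_)
      rw [Finset.sum_eq_single a]
      · simp
      · intro b _ hba
        have h : ¬ π a = π b := fun h => hba (π.injective h.symm)
        simp [h]
      · intro h; exact absurd (Finset.mem_univ a) h
  refine ⟨hbound, hchar, ?_⟩
  have himg : (Finset.univ.filter
      (fun p : (Fin L → Fin L) × (Fin L → Fin L) =>
        (∑ a, ∑ b, Δ a b * (if p.1 a = p.2 b then (1:ℝ) else 0))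
          = ∑ a, Δ a a)) =
      Finset.image (fun π : Equiv.Perm (Fin L) => ((⇑π, ⇑π) :
        (Fin L → Fin L) × (Fin L → Fin L))) Finset.univ := by
    ext p
    rw [Finset.mem_filter, Finset.mem_image]
    constructor
    · rintro ⟨-, h⟩
      obtain ⟨π, h1, h2⟩ := (hchar p).1 h
      exact ⟨π, Finset.mem_univ π, by rw [Prod.ext_iff]; exact ⟨h1.symm, h2.symm⟩⟩
    · rintro ⟨π, -, rfl⟩
      exact ⟨Finset.mem_univ _, (hchar _).2 ⟨π, rfl, rfl⟩⟩
  rw [himg, Finset.card_image_of_injective _ (fun π σ h => by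
    have := congrArg Prod.fst h
    exact Equiv.coe_fn_injective this), Finset.card_univ, Fintype.card_perm,
    Fintype.card_fin]
end
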